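/- Let H be a k-uniform hypergraph family with Turán density π(H) > 0. Then the codegree squared density satisfies σ(H) ≤ π(H)·(π(H)/k + 1 − 1/k). -/

import Mathlib

/-!
Write `D g (C) = ∑_{A ⊇ C, #A = j+1} g A` (`sumSupersets`) and `U h (B) = ∑_{C ⊆ B, #C = j} h C`
(`sumSubsets`); the two are adjoint for the standard inner products on the levels of the Boolean
lattice of an `n`-set. On level `j+1` they satisfy `DU = UD + (n - 2(j+1))`, and an induction on `j`
using this commutation relation and Cauchy–Schwarz gives `‖D g‖² ≤ j (n - j - 1) ‖g‖²` whenever `g`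
has mean zero. Applied to the centred indicator of a `k`-uniform hypergraph `G` with `e` edges this
is the Bey–de Caen bound `co₂(G) ≤ (k-1)(n-k) e + n e² / C(n,k)`. For an extremal hypergraph of
`exco n` we have `e ≤ ex n`; normalising and letting `n → ∞` turns the bound into
`σ ≤ (1 - 1/k) π + π²/k`.
-/

open Filter Finset

theorem sum_sub_average {ι : Type*} (s : Finset ι) (f : ι → ℝ) :
    ∑ i ∈ s, (f i - (∑ j ∈ s, f j) / #s) = 0 := by
  rcases s.eq_empty_or_nonempty with rfl | hs
  · simp
  rw [sum_sub_distrib, sum_const, nsmul_eq_mul, mul_div_cancel₀ _ (by simp [hs.ne_empty]), sub_self]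

theorem sum_sq_sub_average {ι : Type*} (s : Finset ι) (f : ι → ℝ) :
    ∑ i ∈ s, (f i - (∑ j ∈ s, f j) / #s) ^ 2 = ∑ i ∈ s, f i ^ 2 - (∑ i ∈ s, f i) ^ 2 / #s := by
  rcases s.eq_empty_or_nonempty with rfl | hs
  · simp
  have : (#s : ℝ) ≠ 0 := by simp [hs.ne_empty]
  simp only [sub_sq, sum_add_distrib, sum_sub_distrib, sum_const, nsmul_eq_mul, ← sum_mul,
    ← mul_sum]
  field_simp
  ring

theorem filter_powersetCard_subset_eq {α : Type*} [DecidableEq α] {A t : Finset α} (hA : A ⊆ t)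
    (j : ℕ) :
    (t.powersetCard j).filter (· ⊆ A) = A.powersetCard j := by
  ext C
  simp only [mem_filter, mem_powersetCard]
  exact ⟨fun h => ⟨h.2, h.1.2⟩, fun h => ⟨⟨h.1.trans hA, h.2⟩, h.1⟩⟩

theorem card_filter_powersetCard_subset_of_lt {α : Type*} [DecidableEq α] {s t : Finset α} {n : ℕ}
    (h : n < #s) : #((t.powersetCard n).filter (s ⊆ ·)) = 0 := by
  rw [card_eq_zero, filter_eq_empty_iff]
  intro B hB hsB
  have := card_le_card hsB
  rw [(mem_powersetCard.1 hB).2] at this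
  omega

section Levels

variable {α : Type*} [Fintype α] [DecidableEq α]

noncomputable def sumSupersets (t : ℕ) (g : Finset α → ℝ) (C : Finset α) : ℝ :=
  ∑ A ∈ (powersetCard t univ).filter (C ⊆ ·), g A

noncomputable def sumSubsets (j : ℕ) (h : Finset α → ℝ) (B : Finset α) : ℝ :=
  ∑ C ∈ B.powersetCard j, h C

theorem sum_mul_sumSupersets (j t : ℕ) (h g : Finset α → ℝ) :
    ∑ C ∈ powersetCard j univ, h C * sumSupersets t g C
      = ∑ A ∈ powersetCard t univ, sumSubsets j h A * g A := by
  simp only [sumSupersets, sumSubsets, mul_sum, sum_mul, sum_filter]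
  rw [sum_comm]
  refine sum_congr rfl fun A _ => ?_
  rw [← filter_powersetCard_subset_eq (subset_univ A) j, sum_filter]
  simp only [mul_ite, mul_zero]

theorem sum_sumSupersets (j t : ℕ) (g : Finset α → ℝ) :
    ∑ C ∈ powersetCard j univ, sumSupersets t g C
      = t.choose j * ∑ A ∈ powersetCard t univ, g A := by
  have := sum_mul_sumSupersets j t (fun _ => 1) g
  simp only [one_mul] at this
  rw [this, mul_sum]
  refine sum_congr rfl fun A hA => ?_
  simp [sumSubsets, (mem_powersetCard.1 hA).2]

theorem sumSupersets_sumSubsets_eq_sum (t r : ℕ) (h : Finset α → ℝ) (C : Finset α) :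
    sumSupersets t (sumSubsets r h) C
      = ∑ C₂ ∈ powersetCard r univ, #((powersetCard t univ).filter (C ∪ C₂ ⊆ ·)) * h C₂ := by
  rw [sumSupersets, sum_congr rfl fun B _ => by
    rw [sumSubsets, ← filter_powersetCard_subset_eq (subset_univ B) r]]
  simp only [sum_filter, ite_sum_zero]
  rw [sum_comm]
  refine sum_congr rfl fun C₂ _ => ?_
  rw [natCast_card_filter, sum_mul]
  refine sum_congr rfl fun B _ => ?_
  simp only [union_subset_iff, ite_and, ite_mul, one_mul, zero_mul]

theorem sumSubsets_sumSupersets_eq_sum (j r : ℕ) (h : Finset α → ℝ) (C : Finset α) :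
    sumSubsets j (sumSupersets r h) C
      = ∑ C₂ ∈ powersetCard r univ, ((#(C ∩ C₂)).choose j : ℝ) * h C₂ := by
  simp only [sumSupersets, sumSubsets, sum_filter]
  rw [sum_comm]
  refine sum_congr rfl fun C₂ _ => ?_
  rw [← card_powersetCard, ← sum_filter, sum_const, nsmul_eq_mul]
  congr 3
  ext C'
  simp only [mem_filter, mem_powersetCard, subset_inter_iff]
  tauto

theorem card_filter_powersetCard_union_subset (j : ℕ) {C C₂ : Finset α} (hC : #C = j + 1)
    (hC₂ : #C₂ = j + 1) :
    (#((powersetCard (j + 2) univ).filter (C ∪ C₂ ⊆ ·)) : ℝ)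
      = (#(C ∩ C₂)).choose j + if C₂ = C then (Fintype.card α : ℝ) - 2 * (j + 1) else 0 := by
  have hunion := card_union_add_card_inter C C₂
  by_cases heq : C₂ = C
  · subst heq
    have hn : j + 1 ≤ Fintype.card α := hC ▸ card_le_univ C₂
    rw [union_self, inter_self, if_pos rfl, hC,
      card_filter_powersetCard_subset _ _ _ (subset_univ _) (by omega), card_univ, hC,
      show j + 2 - (j + 1) = 1 by omega, Nat.choose_one_right, Nat.choose_succ_self_right,
      Nat.cast_sub hn]
    push_cast
    ring
  have hlt : #(C ∩ C₂) < j + 1 := by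
    refine (hC ▸ card_le_card inter_subset_left).lt_of_ne fun h => heq ?_
    have h₁ := eq_of_subset_of_card_le inter_subset_left (hC.trans h.symm).le
    have h₂ := eq_of_subset_of_card_le inter_subset_right (hC₂.trans h.symm).le
    rw [← h₂, h₁]
  rw [if_neg heq, add_zero]
  rcases (Nat.lt_succ_iff.1 hlt).eq_or_lt with h | h
  · rw [card_filter_powersetCard_subset _ _ _ (subset_univ _) (by omega), h,
      show j + 2 - #(C ∪ C₂) = 0 by omega, Nat.choose_zero_right, Nat.choose_self]
  · rw [card_filter_powersetCard_subset_of_lt (s := C ∪ C₂) (by omega),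
      Nat.choose_eq_zero_of_lt h, Nat.cast_zero]

theorem sumSupersets_sumSubsets {j : ℕ} (h : Finset α → ℝ) {C : Finset α} (hC : #C = j + 1) :
    sumSupersets (j + 2) (sumSubsets (j + 1) h) C
      = sumSubsets j (sumSupersets (j + 1) h) C + ((Fintype.card α : ℝ) - 2 * (j + 1)) * h C := by
  have hdiag : ∑ C₂ ∈ powersetCard (j + 1) univ,
      (if C₂ = C then (Fintype.card α : ℝ) - 2 * (j + 1) else 0) * h C₂
        = ((Fintype.card α : ℝ) - 2 * (j + 1)) * h C := by
    simp [ite_mul, hC]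
  rw [sumSupersets_sumSubsets_eq_sum, sumSubsets_sumSupersets_eq_sum, ← hdiag, ← sum_add_distrib]
  refine sum_congr rfl fun C₂ hC₂ => ?_
  rw [card_filter_powersetCard_union_subset j hC (mem_powersetCard.1 hC₂).2]
  ring

theorem sum_sq_sumSubsets (j : ℕ) (h : Finset α → ℝ) :
    ∑ A ∈ powersetCard (j + 2) univ, sumSubsets (j + 1) h A ^ 2
      = ∑ C ∈ powersetCard j univ, sumSupersets (j + 1) h C ^ 2
        + ((Fintype.card α : ℝ) - 2 * (j + 1)) * ∑ C ∈ powersetCard (j + 1) univ, h C ^ 2 := calc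
  _ = ∑ C ∈ powersetCard (j + 1) univ, h C * sumSupersets (j + 2) (sumSubsets (j + 1) h) C := by
      simp only [sq, sum_mul_sumSupersets]
  _ = ∑ C ∈ powersetCard (j + 1) univ, sumSubsets j (sumSupersets (j + 1) h) C * h C
        + ((Fintype.card α : ℝ) - 2 * (j + 1)) * ∑ C ∈ powersetCard (j + 1) univ, h C ^ 2 := by
      rw [mul_sum, ← sum_add_distrib]
      refine sum_congr rfl fun C hC => ?_
      rw [sumSupersets_sumSubsets h (mem_powersetCard.1 hC).2]
      ring
  _ = _ := by simp only [sq, sum_mul_sumSupersets]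

theorem sum_sq_sumSupersets_le_of_sum_eq_zero (j : ℕ) (g : Finset α → ℝ)
    (hg : ∑ A ∈ powersetCard (j + 1) univ, g A = 0) :
    ∑ C ∈ powersetCard j univ, sumSupersets (j + 1) g C ^ 2
      ≤ j * ((Fintype.card α : ℝ) - j - 1) * ∑ A ∈ powersetCard (j + 1) univ, g A ^ 2 := by
  induction j generalizing g with
  | zero =>
    have h0 : sumSupersets 1 g ∅ = 0 := by simpa [sumSupersets] using hg
    simp [h0]
  | succ j ih =>
    set n : ℝ := (Fintype.card α : ℝ)
    set h := sumSupersets (j + 2) g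
    set X := ∑ C ∈ powersetCard (j + 1) univ, h C ^ 2
    set Y := ∑ A ∈ powersetCard (j + 2) univ, g A ^ 2
    set W := ∑ A ∈ powersetCard (j + 2) univ, sumSubsets (j + 1) h A ^ 2
    have hh : ∑ C ∈ powersetCard (j + 1) univ, h C = 0 := by
      rw [sum_sumSupersets, hg, mul_zero]
    have hX : X = ∑ A ∈ powersetCard (j + 2) univ, sumSubsets (j + 1) h A * g A := by
      simp only [X, sq, ← sum_mul_sumSupersets, h]
    have hW : W ≤ (j + 1) * (n - j - 2) * X := calc
      W = ∑ C ∈ powersetCard j univ, sumSupersets (j + 1) h C ^ 2 + (n - 2 * (j + 1)) * X :=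
          sum_sq_sumSubsets j h
      _ ≤ j * (n - j - 1) * X + (n - 2 * (j + 1)) * X := by
          gcongr
          exact ih h hh
      _ = (j + 1) * (n - j - 2) * X := by ring
    have hY : 0 ≤ (j + 1) * (n - j - 2) * Y := by
      rcases le_or_gt (j + 2) (Fintype.card α) with hn | hn
      · have : (j : ℝ) + 2 ≤ n := by simp only [n]; exact_mod_cast hn
        have : 0 ≤ Y := by positivity
        have : 0 ≤ n - j - 2 := by linarith
        positivity
      · have : powersetCard (j + 2) (univ : Finset α) = ∅ :=
          powersetCard_eq_empty.2 (by rwa [card_univ])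
        simp [Y, this]
    have hCS : X ^ 2 ≤ ((j + 1) * (n - j - 2) * Y) * X := calc
      X ^ 2 ≤ W * Y := hX ▸ sum_mul_sq_le_sq_mul_sq _ _ _
      _ ≤ ((j + 1) * (n - j - 2) * X) * Y := by gcongr
      _ = ((j + 1) * (n - j - 2) * Y) * X := by ring
    have hX0 : 0 ≤ X := by positivity
    push_cast
    calc X ≤ (j + 1) * (n - j - 2) * Y := by nlinarith
      _ = _ := by ring

theorem sumSupersets_sub_const {p : ℕ} {E : Finset α} (hE : #E = p) (f : Finset α → ℝ) (c : ℝ) :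
    sumSupersets (p + 1) (fun A => f A - c) E
      = sumSupersets (p + 1) f E - ((Fintype.card α : ℝ) - p) * c := by
  have hp : p ≤ Fintype.card α := hE ▸ card_le_univ E
  have hcount : (#((powersetCard (p + 1) univ).filter (E ⊆ ·)) : ℝ) = Fintype.card α - p := by
    rw [card_filter_powersetCard_subset _ _ _ (subset_univ E) (by omega), card_univ, hE,
      Nat.add_sub_cancel_left, Nat.choose_one_right, Nat.cast_sub hp]
  rw [sumSupersets, sum_sub_distrib, sum_const, nsmul_eq_mul, hcount, sumSupersets]

theorem sum_sq_sumSupersets_sub_mean {p : ℕ} (hp : p + 1 ≤ Fintype.card α) (f : Finset α → ℝ) :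
    ∑ E ∈ powersetCard p univ, sumSupersets (p + 1) (fun A => f A
        - (∑ B ∈ powersetCard (p + 1) univ, f B) / #(powersetCard (p + 1) (univ : Finset α))) E ^ 2
      = ∑ E ∈ powersetCard p univ, sumSupersets (p + 1) f E ^ 2
        - (p + 1) * ((Fintype.card α : ℝ) - p) * (∑ B ∈ powersetCard (p + 1) univ, f B) ^ 2
          / #(powersetCard (p + 1) (univ : Finset α)) := by
  set n : ℝ := (Fintype.card α : ℝ)
  set N : ℝ := (#(powersetCard (p + 1) (univ : Finset α)) : ℝ)
  set S := ∑ B ∈ powersetCard (p + 1) univ, f B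
  have hm : n - p ≠ 0 := by
    have : (p : ℝ) + 1 ≤ n := by simp only [n]; exact_mod_cast hp
    linarith
  have hlevel : (#(powersetCard p (univ : Finset α)) : ℝ) = N * (p + 1) / (n - p) := by
    have := Nat.choose_succ_right_eq (Fintype.card α) p
    simp only [card_powersetCard, card_univ, n, N]
    rw [eq_div_iff hm, ← Nat.cast_sub (by omega)]
    exact_mod_cast this.symm
  have hdeg : ∑ E ∈ powersetCard p univ, sumSupersets (p + 1) f E = (p + 1) * S := by
    rw [sum_sumSupersets, Nat.choose_succ_self_right]
    push_cast
    rfl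
  rw [sum_congr rfl fun E hE => by rw [sumSupersets_sub_const (mem_powersetCard.1 hE).2]]
  simp only [sub_sq, sum_add_distrib, sum_sub_distrib, sum_const, nsmul_eq_mul, ← sum_mul,
    ← mul_sum, hdeg, hlevel]
  field_simp
  ring

theorem sum_sq_sumSupersets_le {p : ℕ} (hp : p + 1 ≤ Fintype.card α) (f : Finset α → ℝ) :
    ∑ E ∈ powersetCard p univ, sumSupersets (p + 1) f E ^ 2
      ≤ p * ((Fintype.card α : ℝ) - p - 1) * ∑ A ∈ powersetCard (p + 1) univ, f A ^ 2
        + Fintype.card α * (∑ A ∈ powersetCard (p + 1) univ, f A) ^ 2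
          / (Fintype.card α).choose (p + 1) := by
  have key := sum_sq_sumSupersets_le_of_sum_eq_zero p _ (sum_sub_average _ f)
  rw [sum_sq_sumSupersets_sub_mean hp, sum_sq_sub_average] at key
  rw [card_powersetCard, card_univ] at key
  have hN : ((Fintype.card α).choose (p + 1) : ℝ) ≠ 0 := by
    exact_mod_cast (Nat.choose_pos hp).ne'
  have : (Fintype.card α : ℝ) * (∑ A ∈ powersetCard (p + 1) univ, f A) ^ 2
        / (Fintype.card α).choose (p + 1)
      = (p + 1) * ((Fintype.card α : ℝ) - p) * (∑ A ∈ powersetCard (p + 1) univ, f A) ^ 2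
          / (Fintype.card α).choose (p + 1)
        - p * ((Fintype.card α : ℝ) - p - 1) * ((∑ A ∈ powersetCard (p + 1) univ, f A) ^ 2
          / (Fintype.card α).choose (p + 1)) := by
    field_simp
    ring
  rw [this]
  linarith

theorem sum_sq_codegree_le {p : ℕ} (hp : p + 1 ≤ Fintype.card α)
    {G : Finset (Finset α)} (hG : ∀ A ∈ G, #A = p + 1) :
    ∑ E ∈ powersetCard p univ, (#(G.filter (E ⊆ ·)) : ℝ) ^ 2
      ≤ p * ((Fintype.card α : ℝ) - p - 1) * #G
        + Fintype.card α * (#G : ℝ) ^ 2 / (Fintype.card α).choose (p + 1) := by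
  set f : Finset α → ℝ := fun A => if A ∈ G then 1 else 0
  have hGlevel : G ⊆ powersetCard (p + 1) univ := fun A hA =>
    mem_powersetCard.2 ⟨subset_univ A, hG A hA⟩
  have hcodeg : ∀ E, sumSupersets (p + 1) f E = #(G.filter (E ⊆ ·)) := by
    intro E
    rw [sumSupersets, sum_boole, filter_filter]
    congr 2
    ext A
    simp only [mem_filter]
    exact ⟨fun h => ⟨h.2.2, h.2.1⟩, fun h => ⟨hGlevel h.1, h.2, h.1⟩⟩
  have hsum : ∑ A ∈ powersetCard (p + 1) univ, f A = #G := by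
    rw [sum_boole, filter_mem_eq_inter, inter_eq_right.2 hGlevel]
  have hsq : ∑ A ∈ powersetCard (p + 1) univ, f A ^ 2 = #G := by
    rw [← hsum]
    exact sum_congr rfl fun A _ => by simp only [f]; split_ifs <;> norm_num
  simpa only [hcodeg, hsum, hsq] using sum_sq_sumSupersets_le hp f

end Levels

theorem codegree_bound_div_le {n p : ℕ} (hpn : p + 1 ≤ n) {e x : ℝ} (he : 0 ≤ e) (hex : e ≤ x) :
    (p * ((n : ℝ) - p - 1) * e + n * e ^ 2 / n.choose (p + 1)) / (n.choose p * ((n : ℝ) - p) ^ 2)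
      ≤ p / (p + 1) * (x / n.choose (p + 1))
        + 1 / (p + 1) * (x / n.choose (p + 1)) ^ 2 * (n / (n - p)) := by
  have hN : (0 : ℝ) < n.choose (p + 1) := by exact_mod_cast Nat.choose_pos hpn
  have hpn' : (p : ℝ) + 1 ≤ n := by exact_mod_cast hpn
  have hm : (0 : ℝ) < n - p := by linarith
  have hM : (n.choose p : ℝ) = n.choose (p + 1) * (p + 1) / (n - p) := by
    rw [eq_div_iff hm.ne', ← Nat.cast_sub (by omega)]
    exact_mod_cast (Nat.choose_succ_right_eq n p).symm
  calc _ = p / (p + 1) * (e / n.choose (p + 1)) * ((n - p - 1) / (n - p))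
        + 1 / (p + 1) * (e / n.choose (p + 1)) ^ 2 * (n / (n - p)) := by
        rw [hM]
        field_simp
    _ ≤ p / (p + 1) * (x / n.choose (p + 1)) * 1
        + 1 / (p + 1) * (x / n.choose (p + 1)) ^ 2 * (n / (n - p)) := by
        have hx : 0 ≤ x := he.trans hex
        have hm1 : (0 : ℝ) ≤ n - p - 1 := by linarith
        gcongr
        exact (div_le_one hm).2 (by linarith)
    _ = _ := by ring

theorem general_sigma_bound_general (k : ℕ) (hk : 1 ≤ k)
    (ι : Type*) (m : ι → ℕ) (pat : ∀ i, Finset (Finset (Fin (m i))))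
    (ex exco : ℕ → ℕ)
    (hex : ∀ n : ℕ, IsGreatest {c : ℕ | ∃ G : Finset (Finset (Fin n)),
      (∀ e ∈ G, e.card = k) ∧
      (¬ ∃ i, ∃ f : Fin (m i) → Fin n, Function.Injective f ∧
        ∀ e ∈ pat i, e.image f ∈ G) ∧
      G.card = c} (ex n))
    (hexco : ∀ n : ℕ, IsGreatest {c : ℕ | ∃ G : Finset (Finset (Fin n)),
      (∀ e ∈ G, e.card = k) ∧
      (¬ ∃ i, ∃ f : Fin (m i) → Fin n, Function.Injective f ∧
        ∀ e ∈ pat i, e.image f ∈ G) ∧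
      (∑ E ∈ Finset.univ.powersetCard (k - 1), ((G.filter fun A => E ⊆ A).card) ^ 2) = c}
      (exco n))
    (π σ : ℝ)
    (hπ : Tendsto (fun n : ℕ => (ex n : ℝ) / (n.choose k : ℝ)) atTop (nhds π))
    (hσ : Tendsto (fun n : ℕ =>
      (exco n : ℝ) / ((n.choose (k - 1) : ℝ) * ((n : ℝ) - k + 1) ^ 2)) atTop (nhds σ)) :
    σ ≤ π * (π / k + 1 - 1 / k) := by
  obtain ⟨p, rfl⟩ : ∃ p, k = p + 1 := ⟨k - 1, by omega⟩
  choose G hGunif hGfree hGco using fun n => (hexco n).1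
  have hGex : ∀ n, #(G n) ≤ ex n := fun n => (hex n).2 ⟨G n, hGunif n, hGfree n, rfl⟩
  set d : ℕ → ℝ := fun n => ex n / n.choose (p + 1)
  have hle : ∀ᶠ n in atTop,
      (exco n : ℝ) / ((n.choose (p + 1 - 1) : ℝ) * ((n : ℝ) - (p + 1 : ℕ) + 1) ^ 2)
        ≤ p / (p + 1) * d n + 1 / (p + 1) * d n ^ 2 * (n / (n + -p)) := by
    filter_upwards [eventually_ge_atTop (p + 1)] with n hn
    have hco := sum_sq_codegree_le (by rwa [Fintype.card_fin]) (hGunif n)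
    rw [Fintype.card_fin] at hco
    rw [← hGco n, Nat.add_sub_cancel, ← sub_eq_add_neg]
    push_cast
    rw [show (n : ℝ) - (p + 1) + 1 = n - p by ring]
    exact (div_le_div_of_nonneg_right hco (by positivity)).trans
      (codegree_bound_div_le hn (by positivity) (by exact_mod_cast hGex n))
  have hlim : Tendsto (fun n => p / (p + 1) * d n + 1 / (p + 1) * d n ^ 2 * (n / (n + -p)))
      atTop (nhds (p / (p + 1) * π + 1 / (p + 1) * π ^ 2 * 1)) :=
    (hπ.const_mul _).add (((hπ.pow 2).const_mul _).mul (tendsto_natCast_div_add_atTop _))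
  calc σ ≤ _ := le_of_tendsto_of_tendsto hσ hlim hle
    _ = _ := by
      push_cast
      field_simp
      ring

/-- General bound on the codegree squared density: for a family of `k`-uniform hypergraph
patterns with Turán density `π > 0` and codegree squared density `σ`, one has
`σ ≤ π(π/k + 1 − 1/k)`. Here `ex n` is the maximum number of edges and `exco n` the maximum
codegree squared sum of a pattern-free `k`-uniform hypergraph on `n` vertices, and
`π` and `σ` are the corresponding scaled limits. -/
theorem general_sigma_bound (k : ℕ) (hk : 1 ≤ k)
    (ι : Type*) (m : ι → ℕ) (pat : ∀ i, Finset (Finset (Fin (m i))))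
    (hpat : ∀ i, ∀ e ∈ pat i, e.card = k)
    (ex exco : ℕ → ℕ)
    (hex : ∀ n : ℕ, IsGreatest {c : ℕ | ∃ G : Finset (Finset (Fin n)),
      (∀ e ∈ G, e.card = k) ∧
      (¬ ∃ i, ∃ f : Fin (m i) → Fin n, Function.Injective f ∧
        ∀ e ∈ pat i, e.image f ∈ G) ∧
      G.card = c} (ex n))
    (hexco : ∀ n : ℕ, IsGreatest {c : ℕ | ∃ G : Finset (Finset (Fin n)),
      (∀ e ∈ G, e.card = k) ∧
      (¬ ∃ i, ∃ f : Fin (m i) → Fin n, Function.Injective f ∧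
        ∀ e ∈ pat i, e.image f ∈ G) ∧
      (∑ E ∈ Finset.univ.powersetCard (k - 1), ((G.filter fun A => E ⊆ A).card) ^ 2) = c}
      (exco n))
    (π σ : ℝ)
    (hπ : Tendsto (fun n : ℕ => (ex n : ℝ) / (n.choose k : ℝ)) atTop (nhds π))
    (hσ : Tendsto (fun n : ℕ =>
      (exco n : ℝ) / ((n.choose (k - 1) : ℝ) * ((n : ℝ) - k + 1) ^ 2)) atTop (nhds σ))
    (hπpos : 0 < π) :
    σ ≤ π * (π / k + 1 - 1 / k) :=
  general_sigma_bound_general k hk ι m pat ex exco hex hexco π σ hπ hσ
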